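/- arXiv:1207.3947 — 2 statements merged into one kernel-verified Lean document; each statement's English description precedes it below -/
import Mathlib

section
/- The quotient of the presented group B by the normal closure of the set {R_0} ∪ {R'_i R_i : i = 1,…,n−1} is isomorphic to the alternating subgroup W⁺ of the Coxeter group W of the Coxeter matrix m, via the map induced by R_i ↦ s_0 s_i and R'_i ↦ s_i s_0. -/
/-- `altProd a b k` is the alternating product `a * b * a * b * ⋯` with `k` factors. -/
def altProd {M : Type*} [Monoid M] (a b : M) : ℕ → M
  | 0 => 1
  | k + 1 => a * altProd b a k

section Defs
variable {n : ℕ}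

/-- The defining relations of the presented group `B`, with generators
`R_i = Sum.inl i` and `R'_i = Sum.inr i`:  `R'_0 = 1`;
`⟨R'_i,R_j⟩_{m_{ij}} = ⟨R'_j,R_i⟩_{m_{ij}}` and `⟨R_i,R'_j⟩_{m_{ij}} = ⟨R_j,R'_i⟩_{m_{ij}}`
for `i < j` with `m_{ij}` finite (entry `0` encodes `∞`, the relation being omitted). -/
def bourbakiRels (M : CoxeterMatrix (Fin n)) (hn : 0 < n) :
    Set (FreeGroup (Fin n ⊕ Fin n)) :=
  { x | x = FreeGroup.of (Sum.inr (⟨0, hn⟩ : Fin n)) ∨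
      (∃ i j : Fin n, i < j ∧ M i j ≠ 0 ∧
        x = altProd (FreeGroup.of (Sum.inr i)) (FreeGroup.of (Sum.inl j)) (M i j) *
          (altProd (FreeGroup.of (Sum.inr j)) (FreeGroup.of (Sum.inl i)) (M i j))⁻¹) ∨
      (∃ i j : Fin n, i < j ∧ M i j ≠ 0 ∧
        x = altProd (FreeGroup.of (Sum.inl i)) (FreeGroup.of (Sum.inr j)) (M i j) *
          (altProd (FreeGroup.of (Sum.inl j)) (FreeGroup.of (Sum.inr i)) (M i j))⁻¹) }

/-- The Coxeter relations `(s_i s_j)^{m_{ij}} = 1` for `i ≤ j` with `m_{ij}` finite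
(entry `0` encodes `∞`, the relation being omitted). -/
def coxRels (M : CoxeterMatrix (Fin n)) : Set (FreeGroup (Fin n)) :=
  { x | ∃ i j : Fin n, i ≤ j ∧ M i j ≠ 0 ∧
      x = (FreeGroup.of i * FreeGroup.of j) ^ (M i j) }

/-- The Coxeter group of the Coxeter matrix `M`. -/
def CoxGroup (M : CoxeterMatrix (Fin n)) : Type _ := PresentedGroup (coxRels M)

instance (M : CoxeterMatrix (Fin n)) : Group (CoxGroup M) :=
  inferInstanceAs (Group (PresentedGroup (coxRels M)))

/-- The generators `s i` of the Coxeter group. -/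
def coxGen (M : CoxeterMatrix (Fin n)) (i : Fin n) : CoxGroup M := PresentedGroup.of i

/-- The sign character of the Coxeter group, sending each generator to `-1`. -/
def coxSign (M : CoxeterMatrix (Fin n)) : CoxGroup M →* ℤˣ :=
  PresentedGroup.toGroup (f := fun _ : Fin n => (-1 : ℤˣ)) (by
    rintro x ⟨i, j, hij, hm, rfl⟩
    simp)

/-- The alternating subgroup `W⁺` of the Coxeter group. -/
def coxAlt (M : CoxeterMatrix (Fin n)) : Subgroup (CoxGroup M) := (coxSign M).ker

end Defs

/-!
In the quotient `Q`, `R'_i = R_i⁻¹`, and each braid relation `⟨a, b⟩_m = ⟨b⁻¹, a⁻¹⟩_m` is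
equivalent to `(a b)^m = 1`. Hence `φ : R_i ↦ s₀ sᵢ, R'_i ↦ sᵢ s₀` is well defined, with image
in `W⁺`. For the inverse, exchanging `R_i` and `R'_i` is an involution `σ` of `Q`, and
`sᵢ ↦ (R'_i, -1)` defines `ψ : W → Q ⋊_σ {±1}`: the Coxeter relation `(sᵢ sⱼ)^m = 1` becomes
`(R_i⁻¹ R_j)^m = 1`, a braid relation of `Q` in disguise. Now `(x, u) ↦ φ(x) s₀^u` is a left
inverse of `ψ`, `ψ ∘ φ` is the inclusion of `Q`, and the `{±1}`-component of `ψ w` is the sign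
of `w`; so `ψ` maps `W⁺` isomorphically onto `Q`, inversely to `φ`.
-/

section AltProd

variable {G : Type*}

theorem altProd_add_two [Monoid G] (a b : G) (k : ℕ) :
    altProd a b (k + 2) = a * b * altProd a b k := by
  simp only [altProd, mul_assoc]

theorem altProd_two_mul [Monoid G] (a b : G) (k : ℕ) : altProd a b (2 * k) = (a * b) ^ k := by
  induction k with
  | zero => simp [altProd]
  | succ k ih => rw [Nat.mul_succ, altProd_add_two, ih, pow_succ']

theorem altProd_two_mul_add_one [Monoid G] (a b : G) (k : ℕ) :
    altProd a b (2 * k + 1) = (a * b) ^ k * a := by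
  induction k with
  | zero => simp [altProd]
  | succ k ih => rw [show 2 * (k + 1) + 1 = 2 * k + 1 + 2 by ring, altProd_add_two, ih,
      pow_succ', mul_assoc (a * b)]

theorem map_altProd {H F : Type*} [Monoid G] [Monoid H] [FunLike F G H] [MonoidHomClass F G H]
    (f : F) (a b : G) (k : ℕ) : f (altProd a b k) = altProd (f a) (f b) k := by
  induction k generalizing a b with
  | zero => simp [altProd]
  | succ k ih => simp only [altProd, map_mul, ih]

variable [Group G]

theorem altProd_eq_altProd_inv_inv_iff (a b : G) (m : ℕ) :
    altProd a b m = altProd b⁻¹ a⁻¹ m ↔ (a * b) ^ m = 1 := by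
  have hinv (k : ℕ) : (b⁻¹ * a⁻¹) ^ k = ((a * b) ^ k)⁻¹ := by rw [← mul_inv_rev, inv_pow]
  obtain ⟨k, rfl | rfl⟩ := Nat.even_or_odd' m
  · rw [altProd_two_mul, altProd_two_mul, hinv, eq_inv_iff_mul_eq_one, ← pow_add, two_mul]
  · rw [altProd_two_mul_add_one, altProd_two_mul_add_one, hinv, ← mul_inv_rev,
      eq_inv_iff_mul_eq_one, ← mul_assoc, mul_assoc _ a, ← pow_succ, ← pow_add,
      show k + 1 + k = 2 * k + 1 by ring]

theorem altProd_mul_mul_eq_of_pow_eq_one {s t u : G} {m : ℕ} (hs : s * s = 1) (ht : t * t = 1)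
    (hu : u * u = 1) (h : (t * u) ^ m = 1) :
    altProd (t * s) (s * u) m = altProd (u * s) (s * t) m := by
  have hu' : u * s = (s * u)⁻¹ := by
    rw [mul_inv_rev, inv_eq_of_mul_eq_one_right hs, inv_eq_of_mul_eq_one_right hu]
  have ht' : s * t = (t * s)⁻¹ := by
    rw [mul_inv_rev, inv_eq_of_mul_eq_one_right hs, inv_eq_of_mul_eq_one_right ht]
  rw [hu', ht', altProd_eq_altProd_inv_inv_iff, mul_assoc, ← mul_assoc s, hs, one_mul, h]

theorem altProd_mul_mul_eq_of_pow_eq_one' {s t u : G} {m : ℕ} (hs : s * s = 1) (ht : t * t = 1)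
    (hu : u * u = 1) (h : (t * u) ^ m = 1) :
    altProd (s * t) (u * s) m = altProd (s * u) (t * s) m := by
  have hs' : s⁻¹ = s := inv_eq_of_mul_eq_one_right hs
  have hu' : s * u = (u * s)⁻¹ := by rw [mul_inv_rev, hs', inv_eq_of_mul_eq_one_right hu]
  have ht' : t * s = (s * t)⁻¹ := by rw [mul_inv_rev, hs', inv_eq_of_mul_eq_one_right ht]
  rw [hu', ht', altProd_eq_altProd_inv_inv_iff,
    show s * t * (u * s) = s * (t * u) * s⁻¹ by rw [hs']; group, conj_pow, h, mul_one,
    mul_inv_cancel]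

end AltProd

section UnitsHom

variable {G : Type*} [Group G]

def involutionHom (g : G) (hg : g * g = 1) : ℤˣ →* G where
  toFun u := if u = 1 then 1 else g
  map_one' := if_pos rfl
  map_mul' u v := by
    rcases Int.units_eq_one_or u with rfl | rfl <;>
      rcases Int.units_eq_one_or v with rfl | rfl <;> simp [hg]

theorem involutionHom_neg_one (g : G) (hg : g * g = 1) : involutionHom g hg (-1) = g := by
  simp [involutionHom]

end UnitsHom

namespace SemidirectProduct

variable {N G W : Type*} [Group N] [Group G] [Group W] {α : G →* MulAut N}

def mulEquivKerOfLeftInverse (ψ : W →* N ⋊[α] G) (Φ : N ⋊[α] G →* W)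
    (hΦψ : ∀ w, Φ (ψ w) = w) (hψΦ : ∀ x, ψ (Φ (inl x)) = inl x) :
    N ≃* (rightHom.comp ψ).ker where
  toFun x := ⟨Φ (inl x), by simp [hψΦ]⟩
  invFun w := (ψ w).left
  left_inv x := by simp [hψΦ]
  right_inv w := by
    have hw : (ψ w).right = 1 := w.2
    ext
    calc Φ (inl (ψ w).left) = Φ (inl (ψ w).left * inr (ψ w).right) := by rw [hw, map_one, mul_one]
      _ = w := by rw [inl_left_mul_inr_right, hΦψ]
  map_mul' x y := by ext; simp

end SemidirectProduct

section Coxeter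

variable {n : ℕ} (M : CoxeterMatrix (Fin n))

theorem coxGen_mul_pow_eq_one {i j : Fin n} (hij : i ≤ j) (hm : M i j ≠ 0) :
    (coxGen M i * coxGen M j) ^ M i j = 1 := by
  have h := PresentedGroup.one_of_mem (rels := coxRels M) ⟨i, j, hij, hm, rfl⟩
  rwa [map_pow, map_mul] at h

theorem coxGen_mul_self (i : Fin n) : coxGen M i * coxGen M i = 1 := by
  simpa [M.diagonal] using coxGen_mul_pow_eq_one M le_rfl (by simp)

theorem coxGen_mul_coxGen_mul (i : Fin n) (w : CoxGroup M) : coxGen M i * (coxGen M i * w) = w := by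
  rw [← mul_assoc, coxGen_mul_self, one_mul]

theorem coxGen_inv (i : Fin n) : (coxGen M i)⁻¹ = coxGen M i :=
  inv_eq_of_mul_eq_one_right (coxGen_mul_self M i)

theorem coxSign_coxGen (i : Fin n) : coxSign M (coxGen M i) = -1 :=
  PresentedGroup.toGroup.of _

namespace CoxGroup

variable {M} {H : Type*} [Group H]

def lift (f : Fin n → H) (hf : ∀ i j, i ≤ j → M i j ≠ 0 → (f i * f j) ^ M i j = 1) :
    CoxGroup M →* H :=
  PresentedGroup.toGroup <| by
    rintro _ ⟨i, j, hij, hm, rfl⟩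
    simpa using hf i j hij hm

@[simp] theorem lift_coxGen (f : Fin n → H)
    (hf : ∀ i j, i ≤ j → M i j ≠ 0 → (f i * f j) ^ M i j = 1) (i : Fin n) :
    lift f hf (coxGen M i) = f i :=
  PresentedGroup.toGroup.of _

theorem hom_ext {f g : CoxGroup M →* H} (h : ∀ i, f (coxGen M i) = g (coxGen M i)) : f = g :=
  PresentedGroup.ext h

end CoxGroup

end Coxeter

section BourbakiQuot

variable {n : ℕ} (M : CoxeterMatrix (Fin n)) (hn : 0 < n)

abbrev bourbakiExtraRels : Set (PresentedGroup (bourbakiRels M hn)) :=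
  { x | x = PresentedGroup.of (Sum.inl (⟨0, hn⟩ : Fin n)) ∨
      ∃ i : Fin n, i ≠ ⟨0, hn⟩ ∧
        x = PresentedGroup.of (Sum.inr i) * PresentedGroup.of (Sum.inl i) }

abbrev BourbakiQuot : Type :=
  PresentedGroup (bourbakiRels M hn) ⧸ Subgroup.normalClosure (bourbakiExtraRels M hn)

end BourbakiQuot

namespace BourbakiQuot

variable {n : ℕ} (M : CoxeterMatrix (Fin n)) (hn : 0 < n)

/-- The images of the paper's generators `R_i` and `R'_i`. -/
def r (i : Fin n) : BourbakiQuot M hn := QuotientGroup.mk (PresentedGroup.of (Sum.inl i))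

def r' (i : Fin n) : BourbakiQuot M hn := QuotientGroup.mk (PresentedGroup.of (Sum.inr i))

variable {M hn}

theorem hom_ext {H : Type*} [Group H] {f g : BourbakiQuot M hn →* H}
    (hr : ∀ i, f (r M hn i) = g (r M hn i)) (hr' : ∀ i, f (r' M hn i) = g (r' M hn i)) :
    f = g :=
  QuotientGroup.monoidHom_ext _ <| PresentedGroup.ext <| Sum.rec hr hr'

section Lift

variable {H : Type*} [Group H] (a a' : Fin n → H)
  (h₁ : ∀ i j, i < j → M i j ≠ 0 → altProd (a' i) (a j) (M i j) = altProd (a' j) (a i) (M i j))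
  (h₂ : ∀ i j, i < j → M i j ≠ 0 → altProd (a i) (a' j) (M i j) = altProd (a j) (a' i) (M i j))
  (h₀ : a ⟨0, hn⟩ = 1) (h' : ∀ i, a' i * a i = 1)

def lift : BourbakiQuot M hn →* H :=
  QuotientGroup.lift _
    (PresentedGroup.toGroup (f := Sum.elim a a') <| by
      rintro _ (rfl | ⟨i, j, hij, hm, rfl⟩ | ⟨i, j, hij, hm, rfl⟩)
      · simpa [h₀] using h' ⟨0, hn⟩
      · simp [map_altProd, h₁ i j hij hm]
      · simp [map_altProd, h₂ i j hij hm])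
    (Subgroup.normalClosure_le_normal <| by
      rintro _ (rfl | ⟨i, -, rfl⟩) <;> simp [h₀, h'])

theorem lift_r (i : Fin n) : lift a a' h₁ h₂ h₀ h' (r M hn i) = a i := by
  simp [lift, r]

theorem lift_r' (i : Fin n) : lift a a' h₁ h₂ h₀ h' (r' M hn i) = a' i := by
  simp [lift, r']

end Lift

theorem r_zero : r M hn ⟨0, hn⟩ = 1 :=
  (QuotientGroup.eq_one_iff _).2 (Subgroup.subset_normalClosure (Or.inl rfl))

theorem lift_r_r'_eq_one_of_mem {x : FreeGroup (Fin n ⊕ Fin n)} (hx : x ∈ bourbakiRels M hn) :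
    FreeGroup.lift (Sum.elim (r M hn) (r' M hn)) x = 1 := by
  have h : FreeGroup.lift (Sum.elim (r M hn) (r' M hn)) =
      (QuotientGroup.mk' _).comp (PresentedGroup.mk _) :=
    FreeGroup.ext_hom _ _ fun x => by cases x <;> rfl
  rw [h, MonoidHom.comp_apply, PresentedGroup.one_of_mem hx, map_one]

theorem r'_zero : r' M hn ⟨0, hn⟩ = 1 := by
  simpa using lift_r_r'_eq_one_of_mem (M := M) (Or.inl rfl)

theorem r'_mul_r (i : Fin n) : r' M hn i * r M hn i = 1 := by
  by_cases hi : i = ⟨0, hn⟩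
  · rw [hi, r_zero, r'_zero, one_mul]
  · exact (QuotientGroup.eq_one_iff _).2 (Subgroup.subset_normalClosure (Or.inr ⟨i, hi, rfl⟩))

theorem r_mul_r' (i : Fin n) : r M hn i * r' M hn i = 1 :=
  mul_eq_one_comm.1 (r'_mul_r i)

theorem altProd_r'_r {i j : Fin n} (hij : i < j) (hm : M i j ≠ 0) :
    altProd (r' M hn i) (r M hn j) (M i j) = altProd (r' M hn j) (r M hn i) (M i j) := by
  simpa [map_altProd, mul_inv_eq_one] using
    lift_r_r'_eq_one_of_mem (M := M) (Or.inr (Or.inl ⟨i, j, hij, hm, rfl⟩))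

theorem altProd_r_r' {i j : Fin n} (hij : i < j) (hm : M i j ≠ 0) :
    altProd (r M hn i) (r' M hn j) (M i j) = altProd (r M hn j) (r' M hn i) (M i j) := by
  simpa [map_altProd, mul_inv_eq_one] using
    lift_r_r'_eq_one_of_mem (M := M) (Or.inr (Or.inr ⟨i, j, hij, hm, rfl⟩))

theorem r'_mul_r_pow_eq_one {i j : Fin n} (hij : i ≤ j) (hm : M i j ≠ 0) :
    (r' M hn i * r M hn j) ^ M i j = 1 := by
  obtain rfl | hij := hij.eq_or_lt
  · rw [M.diagonal, pow_one, r'_mul_r]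
  · rw [← altProd_eq_altProd_inv_inv_iff, altProd_r'_r hij hm,
      inv_eq_of_mul_eq_one_left (r'_mul_r j), inv_eq_of_mul_eq_one_right (r'_mul_r i)]

variable (M hn)

def toCoxGroup : BourbakiQuot M hn →* CoxGroup M :=
  lift (fun i => coxGen M ⟨0, hn⟩ * coxGen M i) (fun i => coxGen M i * coxGen M ⟨0, hn⟩)
    (fun _ _ hij hm => altProd_mul_mul_eq_of_pow_eq_one (coxGen_mul_self M _)
      (coxGen_mul_self M _) (coxGen_mul_self M _) (coxGen_mul_pow_eq_one M hij.le hm))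
    (fun _ _ hij hm => altProd_mul_mul_eq_of_pow_eq_one' (coxGen_mul_self M _)
      (coxGen_mul_self M _) (coxGen_mul_self M _) (coxGen_mul_pow_eq_one M hij.le hm))
    (coxGen_mul_self M _)
    (fun i => by rw [mul_assoc, ← mul_assoc (coxGen M ⟨0, hn⟩) (coxGen M ⟨0, hn⟩),
      coxGen_mul_self, one_mul, coxGen_mul_self])

/-- Exchanging `R_i` and `R'_i` permutes the defining relations of `B` up to the relators
`R_0`, `R'_0`, so it descends to an involution of the quotient. -/
def swap : BourbakiQuot M hn →* BourbakiQuot M hn :=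
  lift (r' M hn) (r M hn) (fun _ _ hij hm => altProd_r_r' hij hm)
    (fun _ _ hij hm => altProd_r'_r hij hm) r'_zero r_mul_r'

variable {M hn}

@[simp] theorem toCoxGroup_r (i : Fin n) :
    toCoxGroup M hn (r M hn i) = coxGen M ⟨0, hn⟩ * coxGen M i := lift_r ..

@[simp] theorem toCoxGroup_r' (i : Fin n) :
    toCoxGroup M hn (r' M hn i) = coxGen M i * coxGen M ⟨0, hn⟩ := lift_r' ..

@[simp] theorem swap_r (i : Fin n) : swap M hn (r M hn i) = r' M hn i := lift_r ..

@[simp] theorem swap_r' (i : Fin n) : swap M hn (r' M hn i) = r M hn i := lift_r' ..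

theorem swap_swap (x : BourbakiQuot M hn) : swap M hn (swap M hn x) = x :=
  DFunLike.congr_fun (hom_ext (f := (swap M hn).comp (swap M hn)) (g := .id _)
    (by simp) (by simp)) x

variable (M hn)

def swapAction : ℤˣ →* MulAut (BourbakiQuot M hn) :=
  involutionHom ((swap M hn).toMulEquiv (swap M hn) (MonoidHom.ext swap_swap)
    (MonoidHom.ext swap_swap)) (MulEquiv.ext swap_swap)

variable {M hn}

theorem swapAction_neg_one (x : BourbakiQuot M hn) : swapAction M hn (-1) x = swap M hn x := by
  rw [swapAction, involutionHom_neg_one]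
  rfl

theorem mk_neg_one_mul_mk_neg_one (x y : BourbakiQuot M hn) :
    (⟨x, -1⟩ * ⟨y, -1⟩ : BourbakiQuot M hn ⋊[swapAction M hn] ℤˣ) =
      SemidirectProduct.inl (x * swap M hn y) := by
  ext
  · simp [swapAction_neg_one]
  · simp

variable (M hn)

def ofCoxGroup : CoxGroup M →* BourbakiQuot M hn ⋊[swapAction M hn] ℤˣ :=
  CoxGroup.lift (fun i => ⟨r' M hn i, -1⟩) fun i j hij hm => by
    rw [mk_neg_one_mul_mk_neg_one, swap_r', ← map_pow, r'_mul_r_pow_eq_one hij hm, map_one]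

def toCoxGroupOfSemidirect : BourbakiQuot M hn ⋊[swapAction M hn] ℤˣ →* CoxGroup M :=
  SemidirectProduct.lift (toCoxGroup M hn) (involutionHom _ (coxGen_mul_self M ⟨0, hn⟩)) <| by
    intro u
    rcases Int.units_eq_one_or u with rfl | rfl
    · ext; simp
    · refine hom_ext (fun i => ?_) (fun i => ?_) <;>
        simp [swapAction_neg_one, involutionHom_neg_one, coxGen_inv, coxGen_mul_self,
          coxGen_mul_coxGen_mul, mul_assoc]

variable {M hn}

@[simp] theorem ofCoxGroup_coxGen (i : Fin n) :
    ofCoxGroup M hn (coxGen M i) = ⟨r' M hn i, -1⟩ := CoxGroup.lift_coxGen ..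

theorem rightHom_comp_ofCoxGroup :
    SemidirectProduct.rightHom.comp (ofCoxGroup M hn) = coxSign M :=
  CoxGroup.hom_ext fun i => by simp [coxSign_coxGen]

theorem toCoxGroupOfSemidirect_ofCoxGroup (w : CoxGroup M) :
    toCoxGroupOfSemidirect M hn (ofCoxGroup M hn w) = w := by
  refine DFunLike.congr_fun (CoxGroup.hom_ext (f := (toCoxGroupOfSemidirect M hn).comp
    (ofCoxGroup M hn)) (g := .id _) fun i => ?_) w
  simp [toCoxGroupOfSemidirect, involutionHom_neg_one, mul_assoc, coxGen_mul_self]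

theorem toCoxGroupOfSemidirect_inl (x : BourbakiQuot M hn) :
    toCoxGroupOfSemidirect M hn (SemidirectProduct.inl x) = toCoxGroup M hn x :=
  SemidirectProduct.lift_inl ..

theorem ofCoxGroup_toCoxGroup (x : BourbakiQuot M hn) :
    ofCoxGroup M hn (toCoxGroup M hn x) = SemidirectProduct.inl x := by
  refine DFunLike.congr_fun (hom_ext (f := (ofCoxGroup M hn).comp (toCoxGroup M hn))
    (g := SemidirectProduct.inl) (fun i => ?_) (fun i => ?_)) x <;>
  simp only [MonoidHom.comp_apply, toCoxGroup_r, toCoxGroup_r', map_mul, ofCoxGroup_coxGen,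
    mk_neg_one_mul_mk_neg_one, swap_r', r'_zero, map_one, one_mul, mul_one]

variable (M hn)

def mulEquivCoxAlt : BourbakiQuot M hn ≃* coxAlt M :=
  (SemidirectProduct.mulEquivKerOfLeftInverse (ofCoxGroup M hn) (toCoxGroupOfSemidirect M hn)
    toCoxGroupOfSemidirect_ofCoxGroup fun x => by
      rw [toCoxGroupOfSemidirect_inl, ofCoxGroup_toCoxGroup]).trans
  (MulEquiv.subgroupCongr (congrArg MonoidHom.ker rightHom_comp_ofCoxGroup))

variable {M hn}

theorem coe_mulEquivCoxAlt_apply (x : BourbakiQuot M hn) :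
    (mulEquivCoxAlt M hn x : CoxGroup M) = toCoxGroup M hn x :=
  toCoxGroupOfSemidirect_inl x

end BourbakiQuot

/-- The quotient of the presented group `B` by the normal closure of
`{R_0} ∪ {R'_i R_i : i ≠ 0}` is isomorphic to the alternating subgroup `W⁺` of the Coxeter
group, via the map induced by `R_i ↦ s_0 s_i` and `R'_i ↦ s_i s_0`. -/
theorem quotient_of_bourbaki_presentation_iso_alternating_coxeter_group
    (n : ℕ) (hn : 0 < n) (M : CoxeterMatrix (Fin n)) :
    ∃ e : (PresentedGroup (bourbakiRels M hn) ⧸ Subgroup.normalClosure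
        { x : PresentedGroup (bourbakiRels M hn) |
          x = PresentedGroup.of (Sum.inl (⟨0, hn⟩ : Fin n)) ∨
          ∃ i : Fin n, i ≠ ⟨0, hn⟩ ∧
            x = PresentedGroup.of (Sum.inr i) * PresentedGroup.of (Sum.inl i) }) ≃* coxAlt M,
      (∀ i : Fin n,
        ((e (QuotientGroup.mk (PresentedGroup.of (Sum.inl i))) : coxAlt M) : CoxGroup M) =
          coxGen M ⟨0, hn⟩ * coxGen M i) ∧
      (∀ i : Fin n,
        ((e (QuotientGroup.mk (PresentedGroup.of (Sum.inr i))) : coxAlt M) : CoxGroup M) =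
          coxGen M i * coxGen M ⟨0, hn⟩) :=
  ⟨BourbakiQuot.mulEquivCoxAlt M hn,
    fun i => (BourbakiQuot.coe_mulEquivCoxAlt_apply _).trans (BourbakiQuot.toCoxGroup_r i),
    fun i => (BourbakiQuot.coe_mulEquivCoxAlt_apply _).trans (BourbakiQuot.toCoxGroup_r' i)⟩
end

section
/- For n ≥ 2, the alternating subgroup 𝓑⁺(A_n) of the type A braid group is isomorphic to the group presented by generators r_1,…,r_{n−1} and t_0,…,t_{n−1} with relations: r_i r_{i+1} t_{i+1} = r_{i+1}^{−1} r_i^{−1} t_{i−1} and t_{i+1} r_i r_{i+1} = r_{i+1}^{−1} r_i^{−1} t_{i−1} for i = 1,…,n−2; r_i r_{i+1} r_{i+2} t_{i+2} = r_{i+2}^{−1} r_{i+1}^{−1} r_i^{−1} t_{i−1} and t_{i+2} r_i r_{i+1} r_{i+2} = r_{i+2}^{−1} r_{i+1}^{−1} r_i^{−1} t_{i−1} for i = 1,…,n−3; r_i t_i r_i = r_i^{−1} t_{i−1} and (r_i t_i)² = t_{i−1} r_i^{−1} t_{i−1} for i = 1,…,n−1; r_i r_j = r_j r_i for i,j = 1,…,n−1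 with |i−j| > 2. An isomorphism is induced by r_i ↦ g_{i−1} g_i^{−1} (i = 1,…,n−1) and t_i ↦ g_i² (i = 0,…,n−1). -/
/-!
Write `P` for the presented group, `U_k = r_1 ⋯ r_k` and `Y_k = U_k t_k`. The assignment
`r_i ↦ g_{i-1} g_i⁻¹`, `t_i ↦ g_i²` respects the relations, giving `φ : P → 𝓑⁺(A)` with
`φ U_k = g_0 g_k⁻¹` and `φ Y_k = g_0 g_k`. Conjugation by `g_0` is mirrored inside `P` by the
endomorphism `α : r_i ↦ Y_{i-1} Y_i⁻¹, t_i ↦ Y_i U_i⁻¹`; it satisfies `α² = conj t_0`, so it is an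
automorphism and `φ ∘ α = conj g_0 ∘ φ`. Then `g_i ↦ (U_i⁻¹, 1)` defines `Ψ : 𝓑(A) → P ⋊_α ℤ`, a
section of `(x, k) ↦ φ(x) g_0^k`. The sign of `b` is the parity of the `ℤ`-coordinate of `Ψ b`, and
on even elements `(x, 2k) ↦ x t_0^k` is multiplicative; composed with `Ψ` it inverts `φ`.

Everything hinges on `α` respecting the relations. This reduces to `w² t_b = t_a = w t_b w` for
`w = r_{a+1} ⋯ r_b` and `a + 2 ≤ b` (the shadow of `g_a g_b = g_b g_a`), proved by induction on
`b - a` in steps of two: the relations give the cases `b - a = 2, 3`, and they also show that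
`r_{a+1} r_{a+2}` commutes with `r_{a+3} ⋯ r_b`.
-/

/-- Relations of the type A braid group on the `n + 2` generators `g_0, …, g_{n+1}`:
`g_i g_{i+1} g_i = g_{i+1} g_i g_{i+1}` and `g_i g_j = g_j g_i` for `|i-j| > 1`.
(The `n` here corresponds to `n - 2` in the statement "for `n ≥ 2`".) -/
def braidARels (n : ℕ) : Set (FreeGroup (Fin (n + 2))) :=
  { x | (∃ i : Fin (n + 2), (i : ℕ) < n + 1 ∧
          x = FreeGroup.of i * FreeGroup.of (i + 1) * FreeGroup.of i *
            (FreeGroup.of (i + 1) * FreeGroup.of i * FreeGroup.of (i + 1))⁻¹) ∨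
        (∃ i j : Fin (n + 2), (i : ℕ) + 1 < (j : ℕ) ∧
          x = FreeGroup.of i * FreeGroup.of j * (FreeGroup.of j * FreeGroup.of i)⁻¹) }

/-- The type A braid group `𝓑(A_{n+2})`. -/
def BraidGroupA (n : ℕ) : Type := PresentedGroup (braidARels n)

instance (n : ℕ) : Group (BraidGroupA n) := inferInstanceAs (Group (PresentedGroup (braidARels n)))

/-- The generators of the type A braid group. -/
def braidAGen (n : ℕ) (i : Fin (n + 2)) : BraidGroupA n := PresentedGroup.of i

/-- The sign character of the type A braid group, sending each generator to `-1`. -/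
def braidASign (n : ℕ) : BraidGroupA n →* ℤˣ :=
  PresentedGroup.toGroup (f := fun _ : Fin (n + 2) => (-1 : ℤˣ)) (by
    rintro x (⟨i, hi, rfl⟩ | ⟨i, j, hij, rfl⟩) <;> simp)

/-- The alternating subgroup `𝓑⁺(A_{n+2})` of the type A braid group. -/
def braidAAlt (n : ℕ) : Subgroup (BraidGroupA n) := (braidASign n).ker

/-- Generators of the edge presentation of `𝓑⁺(A_{n+2})`: `r_i` for `i = 1, …, n+1`
(indexed by nonzero elements of `Fin (n+2)`), and `t_i` for `i = 0, …, n+1`. -/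
def GenA (n : ℕ) : Type := {i : Fin (n + 2) // i ≠ 0} ⊕ Fin (n + 2)

/-- The word `r_i` in the free group (junk value `1` if `i = 0`). -/
def rw (n : ℕ) (i : Fin (n + 2)) : FreeGroup (GenA n) :=
  if h : i ≠ 0 then FreeGroup.of (Sum.inl ⟨i, h⟩) else 1

/-- The word `t_i` in the free group. -/
def tw (n : ℕ) (i : Fin (n + 2)) : FreeGroup (GenA n) := FreeGroup.of (Sum.inr i)

open Fin.NatCast in
/-- The relations of the edge presentation of `𝓑⁺(A_{n+2})`, with generators
`r_1, …, r_{n+1}` and `t_0, …, t_{n+1}` (here `i` below runs over `m+1`). -/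
def altBraidARels2 (n : ℕ) : Set (FreeGroup (GenA n)) :=
  { x | (∃ m : ℕ, m + 1 ≤ n ∧
          (x = rw n (↑(m+1)) * rw n (↑(m+2)) * tw n (↑(m+2)) *
              ((rw n (↑(m+2)))⁻¹ * (rw n (↑(m+1)))⁻¹ * tw n (↑m))⁻¹ ∨
           x = tw n (↑(m+2)) * rw n (↑(m+1)) * rw n (↑(m+2)) *
              ((rw n (↑(m+2)))⁻¹ * (rw n (↑(m+1)))⁻¹ * tw n (↑m))⁻¹)) ∨
        (∃ m : ℕ, m + 2 ≤ n ∧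
          (x = rw n (↑(m+1)) * rw n (↑(m+2)) * rw n (↑(m+3)) * tw n (↑(m+3)) *
              ((rw n (↑(m+3)))⁻¹ * (rw n (↑(m+2)))⁻¹ * (rw n (↑(m+1)))⁻¹ * tw n (↑m))⁻¹ ∨
           x = tw n (↑(m+3)) * rw n (↑(m+1)) * rw n (↑(m+2)) * rw n (↑(m+3)) *
              ((rw n (↑(m+3)))⁻¹ * (rw n (↑(m+2)))⁻¹ * (rw n (↑(m+1)))⁻¹ * tw n (↑m))⁻¹)) ∨
        (∃ m : ℕ, m ≤ n ∧
          (x = rw n (↑(m+1)) * tw n (↑(m+1)) * rw n (↑(m+1)) *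
              ((rw n (↑(m+1)))⁻¹ * tw n (↑m))⁻¹ ∨
           x = (rw n (↑(m+1)) * tw n (↑(m+1))) ^ 2 *
              (tw n (↑m) * (rw n (↑(m+1)))⁻¹ * tw n (↑m))⁻¹)) ∨
        (∃ i j : ℕ, 1 ≤ i ∧ i + 2 < j ∧ j ≤ n + 1 ∧
          x = rw n (↑i) * rw n (↑j) * (rw n (↑j) * rw n (↑i))⁻¹) }

open Fin.NatCast Multiplicative

section GroupFacts

variable {G : Type*} [Group G]

theorem eq_of_mul_inv_eq_conj {a b c d : G} (x : G) (hab : a = b)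
    (h : c * d⁻¹ = x * (a * b⁻¹) * x⁻¹) : c = d := by
  rwa [hab, mul_inv_cancel, mul_one, mul_inv_cancel, mul_inv_eq_one] at h

theorem mul_self_mul_eq_of_mul_eq {x a b : G} (h : x * a = x⁻¹ * b) : x * x * a = b := by
  rw [mul_assoc, h, mul_inv_cancel_left]

theorem mul_mul_self_eq_of_mul_eq {x a b : G} (h : a * x = x⁻¹ * b) : x * a * x = b := by
  rw [mul_assoc, h, mul_inv_cancel_left]

theorem commute_mul_inv_of_eq_conj {x y z v : G} (hx : z = x * v * x⁻¹)
    (hy : z = y * v * y⁻¹) : Commute (x * y⁻¹) z := by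
  calc x * y⁻¹ * z = x * v * y⁻¹ := by rw [hy]; group
    _ = z * (x * y⁻¹) := by rw [hx]; group

end GroupFacts

section EdgeRelations

variable {G : Type*} [Group G]

def prefixProd (r : ℕ → G) : ℕ → G
  | 0 => 1
  | k + 1 => prefixProd r k * r (k + 1)

def segProd (r : ℕ → G) (a b : ℕ) : G := (prefixProd r a)⁻¹ * prefixProd r b

def prefixProdT (r t : ℕ → G) (k : ℕ) : G := prefixProd r k * t k

@[simp] theorem prefixProd_zero (r : ℕ → G) : prefixProd r 0 = 1 := rfl

theorem prefixProd_succ (r : ℕ → G) (k : ℕ) : prefixProd r (k + 1) = prefixProd r k * r (k + 1) :=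
  rfl

theorem segProd_succ (r : ℕ → G) (a b : ℕ) : segProd r a (b + 1) = segProd r a b * r (b + 1) := by
  rw [segProd, segProd, prefixProd_succ, mul_assoc]

theorem segProd_add_two (r : ℕ → G) (a : ℕ) : segProd r a (a + 2) = r (a+1) * r (a+2) := by
  rw [segProd_succ, segProd_succ, segProd, inv_mul_cancel, one_mul]

theorem segProd_add_three (r : ℕ → G) (a : ℕ) :
    segProd r a (a + 3) = r (a+1) * r (a+2) * r (a+3) := by
  rw [segProd_succ, segProd_add_two]

theorem segProd_mul_segProd (r : ℕ → G) (a b c : ℕ) :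
    segProd r a b * segProd r b c = segProd r a c := by
  simp only [segProd]
  group

theorem map_prefixProd_of_telescoping {H : Type*} [Group H] (f : G →* H) {r : ℕ → G}
    {y : ℕ → H} {K : ℕ} (h : ∀ k, k ≠ 0 → k ≤ K → f (r k) = y (k - 1) * (y k)⁻¹) :
    ∀ k ≤ K, f (prefixProd r k) = y 0 * (y k)⁻¹
  | 0, _ => by simp
  | k + 1, hk => by
    rw [prefixProd_succ, map_mul, map_prefixProd_of_telescoping f h k (by omega),
      h (k + 1) (by omega) hk, Nat.add_sub_cancel]
    group

-- The relations of the presentation, for families indexed by `ℕ`; only `r 1, …, r (n+1)` and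
-- `t 0, …, t (n+1)` occur.
structure EdgeRelations (n : ℕ) (r t : ℕ → G) : Prop where
  rrt : ∀ m, m + 1 ≤ n → r (m+1) * r (m+2) * t (m+2) = (r (m+2))⁻¹ * (r (m+1))⁻¹ * t m
  trr : ∀ m, m + 1 ≤ n → t (m+2) * r (m+1) * r (m+2) = (r (m+2))⁻¹ * (r (m+1))⁻¹ * t m
  rrrt : ∀ m, m + 2 ≤ n → r (m+1) * r (m+2) * r (m+3) * t (m+3) =
    (r (m+3))⁻¹ * (r (m+2))⁻¹ * (r (m+1))⁻¹ * t m
  trrr : ∀ m, m + 2 ≤ n → t (m+3) * r (m+1) * r (m+2) * r (m+3) =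
    (r (m+3))⁻¹ * (r (m+2))⁻¹ * (r (m+1))⁻¹ * t m
  rtr : ∀ m, m ≤ n → r (m+1) * t (m+1) * r (m+1) = (r (m+1))⁻¹ * t m
  rt_sq : ∀ m, m ≤ n → (r (m+1) * t (m+1)) ^ 2 = t m * (r (m+1))⁻¹ * t m
  comm : ∀ i j, 1 ≤ i → i + 2 < j → j ≤ n + 1 → Commute (r i) (r j)

namespace EdgeRelations

variable {n : ℕ} {r t : ℕ → G}

theorem rr_mul_self_mul_t (h : EdgeRelations n r t) {m : ℕ} (hm : m + 1 ≤ n) :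
    r (m+1) * r (m+2) * (r (m+1) * r (m+2)) * t (m+2) = t m :=
  mul_self_mul_eq_of_mul_eq (by rw [mul_inv_rev]; exact h.rrt m hm)

theorem rr_mul_t_mul_self (h : EdgeRelations n r t) {m : ℕ} (hm : m + 1 ≤ n) :
    r (m+1) * r (m+2) * t (m+2) * (r (m+1) * r (m+2)) = t m :=
  mul_mul_self_eq_of_mul_eq (by rw [mul_inv_rev, ← mul_assoc]; exact h.trr m hm)

theorem rrr_mul_self_mul_t (h : EdgeRelations n r t) {m : ℕ} (hm : m + 2 ≤ n) :
    r (m+1) * r (m+2) * r (m+3) * (r (m+1) * r (m+2) * r (m+3)) * t (m+3) = t m :=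
  mul_self_mul_eq_of_mul_eq (by simpa only [mul_inv_rev, mul_assoc] using h.rrrt m hm)

theorem rrr_mul_t_mul_self (h : EdgeRelations n r t) {m : ℕ} (hm : m + 2 ≤ n) :
    r (m+1) * r (m+2) * r (m+3) * t (m+3) * (r (m+1) * r (m+2) * r (m+3)) = t m :=
  mul_mul_self_eq_of_mul_eq (by simpa only [mul_inv_rev, mul_assoc] using h.trrr m hm)

theorem r_add_three_mul_r_add_one (h : EdgeRelations n r t) {m : ℕ} (hm : m + 2 ≤ n) :
    r (m+3) * r (m+1) =
      (r (m+2))⁻¹ * (r (m+1))⁻¹ * t m * (t (m+1))⁻¹ * (r (m+2) * r (m+3)) := by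
  have h3 := h.rrr_mul_self_mul_t hm
  have h2 := h.rr_mul_self_mul_t (m := m + 1) (by omega)
  rw [← h3, ← h2]
  group

theorem commute_rr_rr (h : EdgeRelations n r t) {m : ℕ} (hm : m + 3 ≤ n) :
    Commute (r (m+1) * r (m+2)) (r (m+3) * r (m+4)) := by
  have e1 := h.r_add_three_mul_r_add_one (m := m) (by omega)
  have e2 := h.r_add_three_mul_r_add_one (m := m + 1) (by omega)
  have hc := h.comm (m+1) (m+4) (by omega) (by omega) (by omega)
  symm
  calc r (m+3) * r (m+4) * (r (m+1) * r (m+2))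
        = r (m+3) * (r (m+1) * r (m+4)) * r (m+2) := by rw [hc.eq]; group
    _ = (r (m+2))⁻¹ * (r (m+1))⁻¹ * t m * (t (m+2))⁻¹ * (r (m+3) * r (m+4)) := by
        rw [← mul_assoc, e1, mul_assoc, e2]
        group
    _ = r (m+1) * r (m+2) * (r (m+3) * r (m+4)) := by
        rw [← h.rr_mul_self_mul_t (m := m) (by omega)]
        group

theorem commute_rr_segProd (h : EdgeRelations n r t) {m b : ℕ} (hmb : m + 4 ≤ b)
    (hb : b ≤ n + 1) : Commute (r (m+1) * r (m+2)) (segProd r (m+2) b) := by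
  induction b, hmb using Nat.le_induction with
  | base => rw [segProd_add_two]; exact h.commute_rr_rr (by omega)
  | succ b hmb ih =>
    rw [segProd_succ]
    exact (ih (by omega)).mul_right <| (h.comm (m+1) (b+1) (by omega) (by omega) hb).mul_left
      (h.comm (m+2) (b+1) (by omega) (by omega) hb)

theorem segProd_mul_self_mul_t_and_mul_t_mul_self (h : EdgeRelations n r t) {a b : ℕ}
    (hab : a + 2 ≤ b) (hb : b ≤ n + 1) :
    segProd r a b * segProd r a b * t b = t a ∧ segProd r a b * t b * segProd r a b = t a := by
  obtain ⟨d, rfl⟩ : ∃ d, b = a + d + 2 := ⟨b - a - 2, by omega⟩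
  clear hab
  induction d using Nat.twoStepInduction generalizing a with
  | zero =>
    rw [add_zero, segProd_add_two]
    exact ⟨h.rr_mul_self_mul_t (by omega), h.rr_mul_t_mul_self (by omega)⟩
  | one =>
    rw [show a + 1 + 2 = a + 3 from rfl, segProd_add_three]
    exact ⟨h.rrr_mul_self_mul_t (by omega), h.rrr_mul_t_mul_self (by omega)⟩
  | more d ih _ =>
    obtain ⟨ih1, ih2⟩ := ih (a := a + 2) (by omega)
    have hc := h.commute_rr_segProd (m := a) (b := a + 2 + d + 2) (by omega) (by omega)
    rw [show a + (d + 2) + 2 = a + 2 + d + 2 by omega, ← segProd_mul_segProd r a (a+2),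
      segProd_add_two]
    set x := r (a+1) * r (a+2)
    set y := segProd r (a+2) (a+2+d+2)
    constructor
    · calc x * y * (x * y) * t (a+2+d+2) = x * (y * x) * y * t (a+2+d+2) := by group
        _ = x * x * (y * y * t (a+2+d+2)) := by rw [← hc.eq]; group
        _ = t a := by rw [ih1]; exact h.rr_mul_self_mul_t (by omega)
    · calc x * y * t (a+2+d+2) * (x * y) = x * y * t (a+2+d+2) * (y * x) := congrArg _ hc.eq
        _ = x * (y * t (a+2+d+2) * y) * x := by group
        _ = t a := by rw [ih2]; exact h.rr_mul_t_mul_self (by omega)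

theorem prefixProdT_mul_inv_symm (h : EdgeRelations n r t) {a b : ℕ} (hab : a + 2 ≤ b)
    (hb : b ≤ n + 1) :
    prefixProdT r t a * (prefixProd r b)⁻¹ = prefixProdT r t b * (prefixProd r a)⁻¹ := by
  rw [prefixProdT, prefixProdT, ← (h.segProd_mul_self_mul_t_and_mul_t_mul_self hab hb).2,
    segProd]
  group

theorem inv_mul_prefixProdT_symm (h : EdgeRelations n r t) {a b : ℕ} (hab : a + 2 ≤ b)
    (hb : b ≤ n + 1) :
    (prefixProd r a)⁻¹ * prefixProdT r t b = (prefixProd r b)⁻¹ * prefixProdT r t a := by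
  rw [prefixProdT, prefixProdT, ← (h.segProd_mul_self_mul_t_and_mul_t_mul_self hab hb).1,
    segProd]
  group

theorem prefixProdT_mul_inv_succ (h : EdgeRelations n r t) {a b : ℕ} (hab : a + 2 ≤ b)
    (hb : b ≤ n) :
    prefixProdT r t b * (prefixProdT r t (b+1))⁻¹ =
      prefixProdT r t a * r (b+1) * (prefixProdT r t a)⁻¹ := by
  have e1 := mul_inv_eq_iff_eq_mul.1 (h.prefixProdT_mul_inv_symm hab (by omega)).symm
  have e2 := mul_inv_eq_iff_eq_mul.1 (h.prefixProdT_mul_inv_symm (a := a) (b := b + 1) (by omega)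
    (by omega)).symm
  rw [e1, e2, prefixProd_succ]
  group

end EdgeRelations

-- With `prefixProd r k ↦ g₀ g_k⁻¹` and `prefixProdT r t k ↦ g₀ g_k`, these are the conjugates of
-- `r k ↦ g_{k-1} g_k⁻¹` and `t k ↦ g_k²` by `g₀`.
def conjR (r t : ℕ → G) (k : ℕ) : G := prefixProdT r t (k - 1) * (prefixProdT r t k)⁻¹

def conjT (r t : ℕ → G) (k : ℕ) : G := prefixProdT r t k * (prefixProd r k)⁻¹

theorem EdgeRelations.conj {n : ℕ} {r t : ℕ → G} (h : EdgeRelations n r t) :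
    EdgeRelations n (conjR r t) (conjT r t) where
  rrt m hm := eq_of_mul_inv_eq_conj 1 (h.prefixProdT_mul_inv_symm (a := m) le_rfl (by omega))
    (by simp only [conjR, conjT, Nat.add_sub_cancel, Nat.add_succ_sub_one]; group)
  trr m hm := eq_of_mul_inv_eq_conj (prefixProdT r t (m+2))
    (h.inv_mul_prefixProdT_symm (a := m) le_rfl (by omega)).symm
    (by simp only [conjR, conjT, Nat.add_sub_cancel, Nat.add_succ_sub_one]; group)
  rrrt m hm := eq_of_mul_inv_eq_conj 1
    (h.prefixProdT_mul_inv_symm (a := m) (b := m + 3) (by omega) (by omega))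
    (by simp only [conjR, conjT, Nat.add_sub_cancel, Nat.add_succ_sub_one]; group)
  trrr m hm := eq_of_mul_inv_eq_conj (prefixProdT r t (m+3))
    (h.inv_mul_prefixProdT_symm (a := m) (b := m + 3) (by omega) (by omega)).symm
    (by simp only [conjR, conjT, Nat.add_sub_cancel, Nat.add_succ_sub_one]; group)
  rtr m hm := eq_of_mul_inv_eq_conj (prefixProd r m) (h.rt_sq m hm).symm
    (by simp only [conjR, conjT, prefixProdT, prefixProd_succ, Nat.add_sub_cancel, sq]; group)
  rt_sq m hm := eq_of_mul_inv_eq_conj (prefixProdT r t m) (h.rtr m hm).symm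
    (by simp only [conjR, conjT, prefixProdT, prefixProd_succ, Nat.add_sub_cancel, sq]; group)
  comm i j hi hij hj := by
    obtain ⟨a, rfl⟩ : ∃ a, i = a + 1 := ⟨i - 1, by omega⟩
    obtain ⟨b, rfl⟩ : ∃ b, j = b + 1 := ⟨j - 1, by omega⟩
    simp only [conjR, Nat.add_sub_cancel]
    exact commute_mul_inv_of_eq_conj (h.prefixProdT_mul_inv_succ (by omega) (by omega))
      (h.prefixProdT_mul_inv_succ (by omega) (by omega))

end EdgeRelations

section BraidRelations

variable {G : Type*} [Group G]

structure BraidRelations (n : ℕ) (g : ℕ → G) : Prop where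
  braid : ∀ m, m ≤ n → g m * g (m+1) * g m = g (m+1) * g m * g (m+1)
  comm : ∀ i j, i + 1 < j → j ≤ n + 1 → Commute (g i) (g j)

theorem BraidRelations.edgeRelations {n : ℕ} {g : ℕ → G} (h : BraidRelations n g) :
    EdgeRelations n (fun k ↦ g (k - 1) * (g k)⁻¹) (fun k ↦ g k * g k) where
  rrt m hm := eq_of_mul_inv_eq_conj 1 (h.comm m (m+2) (by omega) (by omega)).eq
    (by simp only [Nat.add_sub_cancel, Nat.add_succ_sub_one]; group)
  trr m hm := eq_of_mul_inv_eq_conj (g (m+2)) (h.comm m (m+2) (by omega) (by omega)).eq.symm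
    (by simp only [Nat.add_sub_cancel, Nat.add_succ_sub_one]; group)
  rrrt m hm := eq_of_mul_inv_eq_conj 1 (h.comm m (m+3) (by omega) (by omega)).eq
    (by simp only [Nat.add_sub_cancel, Nat.add_succ_sub_one]; group)
  trrr m hm := eq_of_mul_inv_eq_conj (g (m+3)) (h.comm m (m+3) (by omega) (by omega)).eq.symm
    (by simp only [Nat.add_sub_cancel, Nat.add_succ_sub_one]; group)
  rtr m hm := eq_of_mul_inv_eq_conj 1 (h.braid m hm)
    (by simp only [Nat.add_sub_cancel]; group)
  rt_sq m hm := eq_of_mul_inv_eq_conj (g m) (h.braid m hm).symm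
    (by simp only [Nat.add_sub_cancel, sq]; group)
  comm i j hi hij hj :=
    ((h.comm _ _ (by omega) (by omega)).mul_right (h.comm _ _ (by omega) hj).inv_right).mul_left
      ((h.comm _ _ (by omega) (by omega)).mul_right (h.comm _ _ (by omega) hj).inv_right).inv_left

end BraidRelations

section Presentations

variable {G : Type*} [Group G] {n : ℕ}

def edgeR (n k : ℕ) : PresentedGroup (altBraidARels2 n) := PresentedGroup.mk _ (rw n k)

def edgeT (n k : ℕ) : PresentedGroup (altBraidARels2 n) := PresentedGroup.mk _ (tw n k)

theorem edgeR_val (i : Fin (n + 2)) (hi : i ≠ 0) :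
    edgeR n i = PresentedGroup.of (rels := altBraidARels2 n) (Sum.inl ⟨i, hi⟩) := by
  rw [edgeR, Fin.cast_val_eq_self, rw, dif_pos hi]
  rfl

theorem edgeT_val (i : Fin (n + 2)) :
    edgeT n i = PresentedGroup.of (rels := altBraidARels2 n) (Sum.inr i) := by
  rw [edgeT, Fin.cast_val_eq_self]
  rfl

theorem edgeRelations_edgeR_edgeT (n : ℕ) : EdgeRelations n (edgeR n) (edgeT n) := by
  constructor <;> intros <;>
    simp only [edgeR, edgeT, commute_iff_eq, ← map_mul (PresentedGroup.mk _),
      ← map_inv (PresentedGroup.mk _), ← map_pow (PresentedGroup.mk _)] <;>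
    refine PresentedGroup.mk_eq_mk_of_mul_inv_mem ?_
  exacts [Or.inl ⟨_, ‹_›, Or.inl rfl⟩, Or.inl ⟨_, ‹_›, Or.inr rfl⟩,
    Or.inr (Or.inl ⟨_, ‹_›, Or.inl rfl⟩), Or.inr (Or.inl ⟨_, ‹_›, Or.inr rfl⟩),
    Or.inr (Or.inr (Or.inl ⟨_, ‹_›, Or.inl rfl⟩)), Or.inr (Or.inr (Or.inl ⟨_, ‹_›, Or.inr rfl⟩)),
    Or.inr (Or.inr (Or.inr ⟨_, _, ‹_›, ‹_›, ‹_›, rfl⟩))]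

def edgeGen (r t : ℕ → G) : GenA n → G := Sum.elim (fun i ↦ r i.1) (fun i ↦ t i)

theorem lift_edgeGen_rw (r t : ℕ → G) {k : ℕ} (hk0 : k ≠ 0) (hk : k ≤ n + 1) :
    FreeGroup.lift (edgeGen r t) (rw n k) = r k := by
  have hk' : ((k : Fin (n + 2)) : ℕ) = k := Fin.val_cast_of_lt (by omega)
  have hne : (k : Fin (n + 2)) ≠ 0 := by simpa [Fin.ext_iff, hk']
  rw [rw, dif_pos hne]
  exact FreeGroup.lift_apply_of.trans (by simp [edgeGen, hk'])

theorem lift_edgeGen_tw (r t : ℕ → G) {k : ℕ} (hk : k ≤ n + 1) :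
    FreeGroup.lift (edgeGen r t) (tw n k) = t k :=
  FreeGroup.lift_apply_of.trans (by simp [edgeGen, Fin.val_cast_of_lt (show k < n + 2 by omega)])

def EdgeRelations.lift {r t : ℕ → G} (h : EdgeRelations n r t) :
    PresentedGroup (altBraidARels2 n) →* G :=
  PresentedGroup.toGroup (f := edgeGen r t) <| by
    rintro x (⟨m, hm, rfl | rfl⟩ | ⟨m, hm, rfl | rfl⟩ | ⟨m, hm, rfl | rfl⟩ |
      ⟨i, j, hi, hij, hj, rfl⟩) <;>
    simp (disch := omega) only [map_mul, map_inv, map_pow, lift_edgeGen_rw, lift_edgeGen_tw,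
      mul_inv_eq_one]
    exacts [h.rrt m hm, h.trr m hm, h.rrrt m hm, h.trrr m hm, h.rtr m hm, h.rt_sq m hm,
      h.comm i j hi hij hj]

theorem EdgeRelations.lift_edgeR {r t : ℕ → G} (h : EdgeRelations n r t) {k : ℕ} (hk0 : k ≠ 0)
    (hk : k ≤ n + 1) : h.lift (edgeR n k) = r k :=
  lift_edgeGen_rw r t hk0 hk

theorem EdgeRelations.lift_edgeT {r t : ℕ → G} (h : EdgeRelations n r t) {k : ℕ}
    (hk : k ≤ n + 1) : h.lift (edgeT n k) = t k :=
  lift_edgeGen_tw r t hk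

theorem edgeGroup_hom_ext {f f' : PresentedGroup (altBraidARels2 n) →* G}
    (hr : ∀ k, k ≠ 0 → k ≤ n + 1 → f (edgeR n k) = f' (edgeR n k))
    (ht : ∀ k ≤ n + 1, f (edgeT n k) = f' (edgeT n k)) : f = f' := by
  refine PresentedGroup.ext ?_
  rintro (⟨i, hi⟩ | i)
  · rw [← edgeR_val]
    exact hr i (fun h0 ↦ hi (Fin.ext h0)) (by omega)
  · rw [← edgeT_val]
    exact ht i (by omega)

def braidGen (n k : ℕ) : BraidGroupA n := braidAGen n k

theorem braidRelations_braidGen (n : ℕ) : BraidRelations n (braidGen n) where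
  braid m hm := by
    have := PresentedGroup.mk_eq_mk_of_mul_inv_mem (rels := braidARels n)
      (Or.inl ⟨(m : Fin (n + 2)), by rw [Fin.val_cast_of_lt (by omega)]; omega, rfl⟩)
    simp only [map_mul, ← Nat.cast_add_one] at this
    exact this
  comm i j hij hj := by
    have := PresentedGroup.mk_eq_mk_of_mul_inv_mem (rels := braidARels n)
      (Or.inr ⟨(i : Fin (n + 2)), (j : Fin (n + 2)), by
        rwa [Fin.val_cast_of_lt (by omega), Fin.val_cast_of_lt (by omega)], rfl⟩)
    simp only [map_mul] at this
    exact this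

def BraidRelations.lift {g : ℕ → G} (h : BraidRelations n g) : BraidGroupA n →* G :=
  PresentedGroup.toGroup (rels := braidARels n) (f := fun i : Fin (n + 2) ↦ g i) <| by
    rintro x (⟨i, hi, rfl⟩ | ⟨i, j, hij, rfl⟩)
    · have hval : ((i + 1 : Fin (n + 2)) : ℕ) = i + 1 := Fin.val_add_one_of_lt' (by omega)
      simpa only [map_mul, map_inv, FreeGroup.lift_apply_of, hval, mul_inv_eq_one] using
        h.braid i (by omega)
    · simpa only [map_mul, map_inv, FreeGroup.lift_apply_of, mul_inv_eq_one] using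
        (h.comm i j hij (by omega)).eq

theorem BraidRelations.lift_braidGen {g : ℕ → G} (h : BraidRelations n g) {k : ℕ}
    (hk : k ≤ n + 1) : h.lift (braidGen n k) = g k :=
  (PresentedGroup.toGroup.of _).trans (congrArg g (Fin.val_cast_of_lt (by omega)))

theorem braidGroup_hom_ext {f f' : BraidGroupA n →* G}
    (h : ∀ k ≤ n + 1, f (braidGen n k) = f' (braidGen n k)) : f = f' :=
  PresentedGroup.ext fun i ↦ by
    have := h i (by omega)
    rwa [braidGen, braidAGen, Fin.cast_val_eq_self] at this

theorem braidASign_braidGen (k : ℕ) : braidASign n (braidGen n k) = -1 :=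
  PresentedGroup.toGroup.of _

end Presentations

section Semidirect

variable {N H : Type*} [Group N] [Group H]

theorem map_zpow_apply_of_map_apply (φ : N →* H) {a : MulAut N} {g : H}
    (h : ∀ x, φ (a x) = g * φ x * g⁻¹) (k : ℤ) (x : N) :
    φ ((a ^ k) x) = g ^ k * φ x * (g ^ k)⁻¹ := by
  induction k using Int.induction_on generalizing x with
  | zero => simp
  | succ k ih => rw [zpow_add_one, MulAut.mul_apply, ih, h, zpow_add_one]; group
  | pred k ih =>
    have hinv : φ (a⁻¹ x) = g⁻¹ * φ x * g := by
      rw [← MulAut.apply_inv_self N a x, h, MulAut.apply_inv_self]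
      group
    rw [zpow_sub_one, MulAut.mul_apply, ih, hinv, zpow_sub_one]
    group

variable {σ : Multiplicative ℤ →* MulAut N}

-- `ℤ`-division: only meaningful when the second coordinate is even.
def halve (t : N) (e : N ⋊[σ] Multiplicative ℤ) : N := e.left * t ^ (toAdd e.right / 2)

theorem halve_mul {t : N} (hσ : σ (ofAdd 2) = MulAut.conj t) {e : N ⋊[σ] Multiplicative ℤ}
    (he : Even (toAdd e.right)) (f : N ⋊[σ] Multiplicative ℤ) :
    halve t (e * f) = halve t e * halve t f := by
  obtain ⟨a, ha⟩ := he
  have hσe : σ e.right = MulAut.conj (t ^ a) := by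
    rw [show e.right = ofAdd 2 ^ a by rw [← ofAdd_zsmul, smul_eq_mul, mul_two, ← ha]; rfl,
      map_zpow, hσ, map_zpow]
  simp only [halve, SemidirectProduct.mul_left, SemidirectProduct.mul_right, toAdd_mul, hσe,
    MulAut.conj_apply, ha]
  rw [show (a + a + toAdd f.right) / 2 = a + toAdd f.right / 2 by omega,
    show (a + a) / 2 = a by omega, zpow_add]
  group

theorem lift_eq_map_halve (fn : N →* H) (g : H)
    (hc : ∀ z, fn.comp (σ z).toMonoidHom = (MulAut.conj (zpowersHom H g z)).toMonoidHom.comp fn)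
    {t : N} (ht : fn t = g ^ 2) {e : N ⋊[σ] Multiplicative ℤ} (he : Even (toAdd e.right)) :
    SemidirectProduct.lift fn (zpowersHom H g) hc e = fn (halve t e) := by
  obtain ⟨a, ha⟩ := he
  change fn e.left * g ^ toAdd e.right = fn (e.left * t ^ (toAdd e.right / 2))
  rw [map_mul, map_zpow, ht, ha, ← zpow_natCast, ← zpow_mul, show (a + a) / 2 = a by omega]
  congr 2
  omega

end Semidirect

section AlternatingBraid

variable (n : ℕ)

def edgeToBraid : PresentedGroup (altBraidARels2 n) →* BraidGroupA n :=
  (braidRelations_braidGen n).edgeRelations.lift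

def edgeConj : PresentedGroup (altBraidARels2 n) →* PresentedGroup (altBraidARels2 n) :=
  (edgeRelations_edgeR_edgeT n).conj.lift

variable {n}

theorem edgeToBraid_prefixProd {k : ℕ} (hk : k ≤ n + 1) :
    edgeToBraid n (prefixProd (edgeR n) k) = braidGen n 0 * (braidGen n k)⁻¹ :=
  map_prefixProd_of_telescoping _ (fun _ hk0 hk ↦ EdgeRelations.lift_edgeR _ hk0 hk) k hk

theorem edgeToBraid_prefixProdT {k : ℕ} (hk : k ≤ n + 1) :
    edgeToBraid n (prefixProdT (edgeR n) (edgeT n) k) = braidGen n 0 * braidGen n k := by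
  rw [prefixProdT, map_mul, edgeToBraid_prefixProd hk, edgeToBraid, EdgeRelations.lift_edgeT _ hk]
  group

theorem edgeConj_prefixProd {k : ℕ} (hk : k ≤ n + 1) :
    edgeConj n (prefixProd (edgeR n) k) = edgeT n 0 * (prefixProdT (edgeR n) (edgeT n) k)⁻¹ := by
  rw [edgeConj, map_prefixProd_of_telescoping _
      (fun _ hk0 hk ↦ (edgeRelations_edgeR_edgeT n).conj.lift_edgeR hk0 hk) k hk,
    prefixProdT, prefixProd_zero, one_mul]

theorem edgeConj_prefixProdT {k : ℕ} (hk : k ≤ n + 1) :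
    edgeConj n (prefixProdT (edgeR n) (edgeT n) k) = edgeT n 0 * (prefixProd (edgeR n) k)⁻¹ := by
  rw [prefixProdT, map_mul, edgeConj_prefixProd hk, edgeConj, EdgeRelations.lift_edgeT _ hk,
    conjT, prefixProdT]
  group

theorem edgeConj_edgeConj (x : PresentedGroup (altBraidARels2 n)) :
    edgeConj n (edgeConj n x) = edgeT n 0 * x * (edgeT n 0)⁻¹ := by
  refine DFunLike.congr_fun (edgeGroup_hom_ext (f := (edgeConj n).comp (edgeConj n))
    (f' := (MulAut.conj (edgeT n 0)).toMonoidHom) (fun k hk0 hk ↦ ?_) (fun k hk ↦ ?_)) x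
  · obtain ⟨j, rfl⟩ : ∃ j, k = j + 1 := ⟨k - 1, by omega⟩
    simp only [MonoidHom.comp_apply, MulEquiv.coe_toMonoidHom, MulAut.conj_apply, edgeConj,
      EdgeRelations.lift_edgeR _ hk0 hk, conjR, Nat.add_sub_cancel, map_mul, map_inv]
    rw [← edgeConj, edgeConj_prefixProdT (by omega), edgeConj_prefixProdT hk, prefixProd_succ]
    group
  · simp only [MonoidHom.comp_apply, MulEquiv.coe_toMonoidHom, MulAut.conj_apply, edgeConj,
      EdgeRelations.lift_edgeT _ hk, conjT, map_mul, map_inv]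
    rw [← edgeConj, edgeConj_prefixProdT hk, edgeConj_prefixProd hk, prefixProdT]
    group

theorem edgeToBraid_edgeConj (x : PresentedGroup (altBraidARels2 n)) :
    edgeToBraid n (edgeConj n x) = braidGen n 0 * edgeToBraid n x * (braidGen n 0)⁻¹ := by
  refine DFunLike.congr_fun (edgeGroup_hom_ext (f := (edgeToBraid n).comp (edgeConj n))
    (f' := (MulAut.conj (braidGen n 0)).toMonoidHom.comp (edgeToBraid n))
    (fun k hk0 hk ↦ ?_) (fun k hk ↦ ?_)) x
  · simp only [MonoidHom.comp_apply, MulEquiv.coe_toMonoidHom, MulAut.conj_apply, edgeConj,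
      EdgeRelations.lift_edgeR _ hk0 hk, conjR, map_mul, map_inv]
    rw [edgeToBraid_prefixProdT (by omega), edgeToBraid_prefixProdT hk, edgeToBraid,
      EdgeRelations.lift_edgeR _ hk0 hk]
    group
  · simp only [MonoidHom.comp_apply, MulEquiv.coe_toMonoidHom, MulAut.conj_apply, edgeConj,
      EdgeRelations.lift_edgeT _ hk, conjT, map_mul, map_inv]
    rw [edgeToBraid_prefixProdT hk, edgeToBraid_prefixProd hk, edgeToBraid,
      EdgeRelations.lift_edgeT _ hk]
    group

variable (n) in
noncomputable def edgeConjAut : MulAut (PresentedGroup (altBraidARels2 n)) :=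
  have hsq : Function.Bijective (edgeConj n ∘ edgeConj n) := by
    rw [show ⇑(edgeConj n) ∘ ⇑(edgeConj n) = MulAut.conj (edgeT n 0) from funext edgeConj_edgeConj]
    exact (MulAut.conj _).bijective
  MulEquiv.ofBijective (edgeConj n) ⟨hsq.1.of_comp, hsq.2.of_comp⟩

theorem edgeConjAut_apply (x : PresentedGroup (altBraidARels2 n)) :
    edgeConjAut n x = edgeConj n x :=
  rfl

variable (n) in
abbrev EdgeSemidirect : Type :=
  PresentedGroup (altBraidARels2 n) ⋊[zpowersHom _ (edgeConjAut n)] Multiplicative ℤ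

theorem zpowersHom_edgeConjAut_two :
    zpowersHom _ (edgeConjAut n) (ofAdd 2) = MulAut.conj (edgeT n 0) := by
  ext x
  rw [zpowersHom_apply, toAdd_ofAdd, zpow_two, MulAut.mul_apply]
  exact edgeConj_edgeConj x

theorem zpowersHom_edgeConjAut_one_apply (x : PresentedGroup (altBraidARels2 n)) :
    zpowersHom _ (edgeConjAut n) (ofAdd 1) x = edgeConj n x := by
  rw [zpowersHom_apply, toAdd_ofAdd, zpow_one]
  rfl

theorem braidRelations_semidirect :
    BraidRelations n (fun k ↦ (⟨(prefixProd (edgeR n) k)⁻¹, ofAdd 1⟩ : EdgeSemidirect n)) where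
  braid m hm := by
    refine SemidirectProduct.ext ?_ rfl
    simp only [SemidirectProduct.mul_left, SemidirectProduct.mul_right]
    rw [show (ofAdd 1 * ofAdd 1 : Multiplicative ℤ) = ofAdd 2 from rfl, zpowersHom_edgeConjAut_two]
    simp only [zpowersHom_edgeConjAut_one_apply, MulAut.conj_apply, map_inv,
      edgeConj_prefixProd (show m + 1 ≤ n + 1 by omega),
      edgeConj_prefixProd (show m ≤ n + 1 by omega)]
    refine eq_of_mul_inv_eq_conj 1 ((edgeRelations_edgeR_edgeT n).rtr m hm) ?_
    simp only [prefixProdT, prefixProd_succ]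
    group
  comm i j hij hj := by
    refine SemidirectProduct.ext ?_ rfl
    simp only [SemidirectProduct.mul_left, zpowersHom_edgeConjAut_one_apply, map_inv,
      edgeConj_prefixProd hj, edgeConj_prefixProd (show i ≤ n + 1 by omega)]
    have := (edgeRelations_edgeR_edgeT n).inv_mul_prefixProdT_symm hij hj
    rw [mul_inv_rev, mul_inv_rev, inv_inv, inv_inv, ← mul_assoc, this, mul_assoc]

variable (n) in
noncomputable def braidToSemidirect : BraidGroupA n →* EdgeSemidirect n :=
  braidRelations_semidirect.lift

theorem braidToSemidirect_braidGen {k : ℕ} (hk : k ≤ n + 1) :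
    braidToSemidirect n (braidGen n k) = ⟨(prefixProd (edgeR n) k)⁻¹, ofAdd 1⟩ :=
  BraidRelations.lift_braidGen _ hk

variable (n) in
noncomputable def semidirectToBraid : EdgeSemidirect n →* BraidGroupA n :=
  SemidirectProduct.lift (edgeToBraid n) (zpowersHom _ (braidGen n 0)) fun z ↦ MonoidHom.ext
    (map_zpow_apply_of_map_apply (edgeToBraid n) (a := edgeConjAut n) (g := braidGen n 0)
      edgeToBraid_edgeConj (toAdd z))

theorem semidirectToBraid_braidToSemidirect (b : BraidGroupA n) :
    semidirectToBraid n (braidToSemidirect n b) = b := by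
  refine DFunLike.congr_fun (braidGroup_hom_ext
    (f := (semidirectToBraid n).comp (braidToSemidirect n)) (f' := MonoidHom.id _)
    fun k hk ↦ ?_) b
  rw [MonoidHom.comp_apply, braidToSemidirect_braidGen hk, MonoidHom.id_apply]
  change edgeToBraid n (prefixProd (edgeR n) k)⁻¹ * braidGen n 0 ^ toAdd (ofAdd (1 : ℤ)) = _
  rw [map_inv, edgeToBraid_prefixProd hk, toAdd_ofAdd, zpow_one]
  group

theorem braidASign_eq_neg_one_zpow (b : BraidGroupA n) :
    braidASign n b = (-1) ^ toAdd (braidToSemidirect n b).right := by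
  refine DFunLike.congr_fun (braidGroup_hom_ext (f := braidASign n)
    (f' := (zpowersHom ℤˣ (-1)).comp (SemidirectProduct.rightHom.comp (braidToSemidirect n)))
    fun k hk ↦ ?_) b
  simp [braidASign_braidGen, braidToSemidirect_braidGen hk]

theorem even_right_braidToSemidirect {b : BraidGroupA n} (hb : b ∈ braidAAlt n) :
    Even (toAdd (braidToSemidirect n b).right) := by
  have hsign : braidASign n b = 1 := hb
  rw [braidASign_eq_neg_one_zpow, neg_one_zpow_eq_ite] at hsign
  by_contra hodd
  rw [if_neg hodd] at hsign
  exact absurd hsign (by decide)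

theorem edgeToBraid_mem (x : PresentedGroup (altBraidARels2 n)) :
    edgeToBraid n x ∈ braidAAlt n := by
  refine DFunLike.congr_fun (edgeGroup_hom_ext (f := (braidASign n).comp (edgeToBraid n)) (f' := 1)
    (fun k hk0 hk ↦ ?_) (fun k hk ↦ ?_)) x
  · simp [edgeToBraid, EdgeRelations.lift_edgeR _ hk0 hk, braidASign_braidGen]
  · simp [edgeToBraid, EdgeRelations.lift_edgeT _ hk, braidASign_braidGen]

theorem halve_braidToSemidirect_edgeToBraid (x : PresentedGroup (altBraidARels2 n)) :
    halve (edgeT n 0) (braidToSemidirect n (edgeToBraid n x)) = x := by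
  let F : PresentedGroup (altBraidARels2 n) →* PresentedGroup (altBraidARels2 n) :=
    MonoidHom.mk' (fun x ↦ halve (edgeT n 0) (braidToSemidirect n (edgeToBraid n x))) fun x y ↦ by
      rw [map_mul, map_mul, halve_mul zpowersHom_edgeConjAut_two
        (even_right_braidToSemidirect (edgeToBraid_mem x))]
  refine DFunLike.congr_fun (edgeGroup_hom_ext (f := F) (f' := MonoidHom.id _)
    (fun k hk0 hk ↦ ?_) (fun k hk ↦ ?_)) x
  · obtain ⟨j, rfl⟩ : ∃ j, k = j + 1 := ⟨k - 1, by omega⟩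
    simp only [F, MonoidHom.mk'_apply, MonoidHom.id_apply, edgeToBraid,
      EdgeRelations.lift_edgeR _ hk0 hk, Nat.add_sub_cancel, map_mul, map_inv]
    rw [braidToSemidirect_braidGen (by omega), braidToSemidirect_braidGen hk]
    simp [halve, prefixProd_succ, edgeR]
  · simp only [F, MonoidHom.mk'_apply, MonoidHom.id_apply, edgeToBraid,
      EdgeRelations.lift_edgeT _ hk, map_mul]
    rw [braidToSemidirect_braidGen hk]
    simp [halve, edgeConjAut_apply, edgeConj_prefixProd hk, prefixProdT, mul_assoc]

theorem edgeToBraid_injective : Function.Injective (edgeToBraid n) :=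
  Function.LeftInverse.injective (g := fun b ↦ halve (edgeT n 0) (braidToSemidirect n b))
    halve_braidToSemidirect_edgeToBraid

theorem exists_edgeToBraid_eq {b : BraidGroupA n} (hb : b ∈ braidAAlt n) :
    ∃ x, edgeToBraid n x = b := by
  have ht : edgeToBraid n (edgeT n 0) = braidGen n 0 ^ 2 := by
    rw [edgeToBraid, EdgeRelations.lift_edgeT _ (by omega), sq]
  exact ⟨_, (lift_eq_map_halve (edgeToBraid n) (braidGen n 0) _ ht
    (even_right_braidToSemidirect hb)).symm.trans (semidirectToBraid_braidToSemidirect b)⟩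

theorem edgeToBraid_of_inl (i : Fin (n + 2)) (hi : i ≠ 0) :
    edgeToBraid n (PresentedGroup.of (rels := altBraidARels2 n) (Sum.inl ⟨i, hi⟩)) =
      braidAGen n (i - 1) * (braidAGen n i)⁻¹ := by
  have hval : (((i : ℕ) - 1 : ℕ) : Fin (n + 2)) = i - 1 :=
    Fin.ext (by rw [Fin.val_cast_of_lt (by omega), Fin.val_sub_one_of_ne_zero hi])
  rw [← edgeR_val, edgeToBraid, EdgeRelations.lift_edgeR _ (fun h ↦ hi (Fin.ext h)) (by omega),
    braidGen, braidGen, hval, Fin.cast_val_eq_self]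

theorem edgeToBraid_of_inr (i : Fin (n + 2)) :
    edgeToBraid n (PresentedGroup.of (rels := altBraidARels2 n) (Sum.inr i)) =
      braidAGen n i * braidAGen n i := by
  rw [← edgeT_val, edgeToBraid, EdgeRelations.lift_edgeT _ (by omega), braidGen,
    Fin.cast_val_eq_self]

variable (n) in
noncomputable def edgeEquiv : PresentedGroup (altBraidARels2 n) ≃* braidAAlt n :=
  MulEquiv.ofBijective ((edgeToBraid n).codRestrict _ edgeToBraid_mem)
    ⟨fun _ _ hxy ↦ edgeToBraid_injective (congrArg Subtype.val hxy),
      fun b ↦ (exists_edgeToBraid_eq b.2).imp fun _ hx ↦ Subtype.ext hx⟩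

end AlternatingBraid

/-- The alternating subgroup `𝓑⁺(A_{n+2})` of the type A braid group is isomorphic to the
group presented by `r_1, …, r_{n+1}`, `t_0, …, t_{n+1}` with the listed relations, via
`r_i ↦ g_{i-1} g_i⁻¹` and `t_i ↦ g_i²`. -/
theorem alternating_braid_group_typeA_edge_presentation (n : ℕ) :
    ∃ e : PresentedGroup (altBraidARels2 n) ≃* braidAAlt n,
      (∀ (i : Fin (n + 2)) (h : i ≠ 0),
        ((e (PresentedGroup.of (Sum.inl ⟨i, h⟩)) : braidAAlt n) : BraidGroupA n) =
          braidAGen n (i - 1) * (braidAGen n i)⁻¹) ∧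
      (∀ i : Fin (n + 2),
        ((e (PresentedGroup.of (Sum.inr i)) : braidAAlt n) : BraidGroupA n) =
          braidAGen n i * braidAGen n i) := by
  exact ⟨edgeEquiv n, edgeToBraid_of_inl, edgeToBraid_of_inr⟩
end
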